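/- arXiv:1304.5278 — 3 statements merged into one kernel-verified Lean document; each statement's English description precedes it below -/
import Mathlib

section
/- Exponential blowup of de-parameterization is unavoidable: for the PMTS with states {s₀, s₁, s₂}, transitions {(s₀,p,s₁), (s₁,p,s₂) | p ∈ P} (using parameters as action labels), and obligations Φ(s₀) = Φ(s₁) = ⋀_{p∈P} ((p, successor) ⇔ p), Φ(s₂) = tt, every BMTS whose initial state has the same set of implementations has at least 2^|P| states. -/
/-!
An implementation refines `blowupPMTS P` at `0` exactly when its root has some label set `ν`,
every successor of the root has label set `ν`, and every state two steps away is dead.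
If `N` has the same implementations, the two-step implementation of a nonempty `A ⊆ P` is
matched at `n0` by an admissible set containing a move into some state `u_A`. Any implementation
`g` of `u_A` can be grafted below the root of that two-step implementation; the result refines
`N` at `n0`, hence refines `blowupPMTS P`, so `g` makes exactly the moves `A` once and stops.
Therefore `u_A` determines `A`, and `u_A ≠ n0` since `n0` admits the two-step implementation
of `A`. This gives an injection of `Finset P` into the states of `N`.
-/

/-- Boolean formulae over a set of atomic propositions `X`. -/
inductive BForm (X : Type) : Type where
  | tt : BForm X
  | var : X → BForm X
  | neg : BForm X → BForm X
  | and : BForm X → BForm X → BForm X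
  | or : BForm X → BForm X → BForm X

/-- Satisfaction of a Boolean formula under a valuation (set of true atoms). -/
def BForm.sat {X : Type} (ν : Set X) : BForm X → Prop
  | .tt => True
  | .var x => x ∈ ν
  | .neg φ => ¬ BForm.sat ν φ
  | .and φ ψ => BForm.sat ν φ ∧ BForm.sat ν ψ
  | .or φ ψ => BForm.sat ν φ ∨ BForm.sat ν ψ

/-- Substitute a formula for each atom. -/
def BForm.map {X Y : Type} (f : X → BForm Y) : BForm X → BForm Y
  | .tt => .tt
  | .var x => f x
  | .neg φ => .neg (BForm.map f φ)
  | .and φ ψ => .and (BForm.map f φ) (BForm.map f ψ)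
  | .or φ ψ => .or (BForm.map f φ) (BForm.map f ψ)

def BForm.xor {X : Type} (φ ψ : BForm X) : BForm X :=
  .or (.and φ (.neg ψ)) (.and (.neg φ) ψ)

def BForm.iff {X : Type} (φ ψ : BForm X) : BForm X :=
  .and (.or (.neg φ) ψ) (.or φ (.neg ψ))

/-- A parametric modal transition system over alphabet `A`, states `S`, parameters `P`. -/
structure PMTS (A S P : Type) : Type where
  T : Set (S × A × S)
  Φ : S → BForm ((A × S) ⊕ P)

/-- A Boolean modal transition system is a PMTS with an empty parameter set. -/
abbrev BMTS (A S : Type) := PMTS A S Empty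

/-- `T(s)`: the outgoing transitions of `s`. -/
def PMTS.Tsucc {A S P : Type} (M : PMTS A S P) (s : S) : Set (A × S) :=
  {p | (s, p.1, p.2) ∈ M.T}

/-- `Tran_ν(s)`: admissible sets of outgoing transitions under parameter valuation `ν`. -/
def PMTS.Tran {A S P : Type} (M : PMTS A S P) (ν : Set P) (s : S) : Set (Set (A × S)) :=
  {E | E ⊆ M.Tsucc s ∧ BForm.sat (Sum.inl '' E ∪ Sum.inr '' ν) (M.Φ s)}

open Classical in
/-- Substitution of truth values for parameters according to a valuation `ν`. -/
noncomputable def paramSubst {X P : Type} (ν : Set P) : X ⊕ P → BForm (X ⊕ Empty)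
  | Sum.inl x => .var (Sum.inl x)
  | Sum.inr p => if p ∈ ν then .tt else .neg .tt

/-- The BMTS `M^ν` induced by a parameter valuation `ν`. -/
noncomputable def PMTS.toBMTS {A S P : Type} (M : PMTS A S P) (ν : Set P) : BMTS A S where
  T := M.T
  Φ := fun s => (M.Φ s).map (paramSubst ν)

/-- The modal-refinement condition on a relation `R`, w.r.t. valuations `μ` and `ν`. -/
def RefCond {A S1 S2 P1 P2 : Type} (M1 : PMTS A S1 P1) (M2 : PMTS A S2 P2)
    (μ : Set P1) (ν : Set P2) (R : Set (S1 × S2)) : Prop :=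
  ∀ p ∈ R, ∀ Ms ∈ M1.Tran μ p.1, ∃ N ∈ M2.Tran ν p.2,
    (∀ q ∈ Ms, ∃ t' : S2, (q.1, t') ∈ N ∧ (q.2, t') ∈ R) ∧
    (∀ q ∈ N, ∃ s' : S1, (q.1, s') ∈ Ms ∧ (s', q.2) ∈ R)

/-- `R` is a modal refinement relation between two BMTS. -/
def IsRefRel {A S1 S2 : Type} (M1 : BMTS A S1) (M2 : BMTS A S2) (R : Set (S1 × S2)) : Prop :=
  RefCond M1 M2 ∅ ∅ R

/-- Modal refinement on BMTS. -/
def BRefines {A S1 S2 : Type} (M1 : BMTS A S1) (M2 : BMTS A S2) (s : S1) (t : S2) : Prop :=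
  ∃ R : Set (S1 × S2), (s, t) ∈ R ∧ IsRefRel M1 M2 R

/-- Modal refinement on PMTS (valuation-wise definition). -/
def PRefines {A S1 S2 P1 P2 : Type} (M1 : PMTS A S1 P1) (M2 : PMTS A S2 P2)
    (s : S1) (t : S2) : Prop :=
  ∀ μ : Set P1, ∃ ν : Set P2, BRefines (M1.toBMTS μ) (M2.toBMTS ν) s t

/-- An implementation: every state's only admissible transition set is its full set of
transitions (i.e. `Φ(s)` is the conjunction of all outgoing transitions). -/
def PMTS.IsImplementation {A S : Type} (M : BMTS A S) : Prop :=
  ∀ s : S, M.Tran ∅ s = {M.Tsucc s}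

/-- Thorough refinement: inclusion of sets of implementations. -/
def ThoroughRefines {A S1 S2 P1 P2 : Type} (M1 : PMTS A S1 P1) (M2 : PMTS A S2 P2)
    (s : S1) (t : S2) : Prop :=
  ∀ (SI : Type) (I : BMTS A SI) (i : SI), I.IsImplementation →
    PRefines I M1 i s → PRefines I M2 i t

/-- A PMTS is deterministic if no state has two distinct successors under the same action. -/
def PMTS.Deterministic {A S P : Type} (M : PMTS A S P) : Prop :=
  ∀ s a t t', (s, a, t) ∈ M.T → (s, a, t') ∈ M.T → t = t'

/-- Global (semantic) consistency: every state has an implementation. -/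
def PMTS.SemConsistent {A S : Type} (M : BMTS A S) : Prop :=
  ∀ s : S, ∃ (SI : Type) (I : BMTS A SI) (i : SI), I.IsImplementation ∧ BRefines I M i s

/-- Parameter substitution used in the de-parameterization, also retagging states
with the valuation. -/
def deParamSubst {A S P : Type} [DecidableEq P] (ν : Finset P) :
    (A × S) ⊕ P → BForm ((A × Option (S × Finset P)) ⊕ Empty)
  | Sum.inl q => .var (Sum.inl (q.1, some (q.2, ν)))
  | Sum.inr p => if p ∈ ν then .tt else .neg .tt

/-- The de-parameterization `M^B` of a PMTS `M` with initial state `s0`.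
The state `none` plays the rôle of `s0^B`. -/
noncomputable def PMTS.deParam {A S P : Type} [Fintype P] [DecidableEq P] (M : PMTS A S P) (s0 : S) :
    BMTS A (Option (S × Finset P)) where
  T := {x | (∃ a s ν, x = (none, a, some (s, ν)) ∧ (s0, a, s) ∈ M.T) ∨
            (∃ s a s' ν, x = (some (s, ν), a, some (s', ν)) ∧ (s, a, s') ∈ M.T)}
  Φ := fun st => match st with
    | none => (Finset.univ : Finset (Finset P)).toList.foldr
        (fun ν acc => BForm.xor ((M.Φ s0).map (deParamSubst ν)) acc) (.neg .tt)
    | some (s, ν) => (M.Φ s).map (deParamSubst ν)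

/-- The set of `a`-successors of a set of states. -/
def PMTS.succSet {A S P : Type} (M : PMTS A S P) (X : Set S) (a : A) : Set S :=
  {s' | ∃ s ∈ X, (s, a, s') ∈ M.T}

/-- The deterministic hull `𝒟(M)` of a PMTS (powerset construction). -/
noncomputable def PMTS.detHull {A S P : Type} [Fintype S] (M : PMTS A S P) :
    PMTS A (Set S) P where
  T := {x | x.2.2 = M.succSet x.1 x.2.1}
  Φ := fun X => ((Set.toFinite X).toFinset).toList.foldr
    (fun s acc => .or ((M.Φ s).map (fun y => match y with
      | Sum.inl q => .var (Sum.inl (q.1, M.succSet X q.1))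
      | Sum.inr p => .var (Sum.inr p))) acc) (.neg .tt)

open Classical in
/-- The parameter-free hull `𝒫(M)` of a PMTS. -/
noncomputable def PMTS.pfHull {A S P : Type} [Fintype P] [DecidableEq P] (M : PMTS A S P) :
    BMTS A S where
  T := M.T
  Φ := fun s => (Finset.univ : Finset (Finset P)).toList.foldr
    (fun ν acc => .or ((M.Φ s).map (paramSubst (↑ν : Set P))) acc) (.neg .tt)

open Classical in
/-- Removing a state `s` (and all transitions involving it) from a BMTS. -/
noncomputable def PMTS.removeState {A S : Type} (M : BMTS A S) (s : S) :
    BMTS A {t : S // t ≠ s} where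
  T := {x | (x.1.1, x.2.1, x.2.2.1) ∈ M.T}
  Φ := fun t => (M.Φ t.1).map (fun y => match y with
    | Sum.inl q => if h : q.2 = s then .neg .tt else .var (Sum.inl (q.1, ⟨q.2, h⟩))
    | Sum.inr e => Empty.elim e)

/-- The PMTS witnessing the unavoidable exponential blowup of de-parameterization:
actions are the parameters, and both steps must take exactly the transitions whose
parameter is true. -/
noncomputable def blowupPMTS (P : Type) [Fintype P] [DecidableEq P] : PMTS P (Fin 3) P where
  T := {x | ∃ p : P, x = (0, p, 1) ∨ x = (1, p, 2)}
  Φ := fun s =>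
    if s = 0 then
      (Finset.univ : Finset P).toList.foldr
        (fun p acc => .and (BForm.iff (.var (Sum.inl (p, (1 : Fin 3)))) (.var (Sum.inr p))) acc) .tt
    else if s = 1 then
      (Finset.univ : Finset P).toList.foldr
        (fun p acc => .and (BForm.iff (.var (Sum.inl (p, (2 : Fin 3)))) (.var (Sum.inr p))) acc) .tt
    else .tt

/-- A classical modal transition system. -/
structure MTS (A S : Type) where
  may : Set (S × A × S)
  must : Set (S × A × S)
  must_sub : must ⊆ may

/-- Classical MTS modal refinement. -/
def MTSRefines {A S1 S2 : Type} (N1 : MTS A S1) (N2 : MTS A S2) (s0 : S1) (t0 : S2) : Prop :=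
  ∃ R : Set (S1 × S2), (s0, t0) ∈ R ∧ ∀ p ∈ R,
    (∀ a s', (p.1, a, s') ∈ N1.may → ∃ t', (p.2, a, t') ∈ N2.may ∧ (s', t') ∈ R) ∧
    (∀ a t', (p.2, a, t') ∈ N2.must → ∃ s', (p.1, a, s') ∈ N1.must ∧ (s', t') ∈ R)

/-- A BMTS corresponds to an MTS when its transitions are the may-transitions and the
admissible transition sets are exactly those between the must- and may-successors
(i.e. `Φ(s)` is the conjunction of the must-transitions of `s`). -/
def Corresponds {A S : Type} (N : MTS A S) (M : BMTS A S) : Prop :=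
  M.T = N.may ∧
  ∀ s, M.Tran ∅ s = {E | {q : A × S | (s, q.1, q.2) ∈ N.must} ⊆ E ∧ E ⊆ M.Tsucc s}

/-- The `Avoid` set: the least set of pairs `(s, 𝒯)` closed under the rules of the
thorough-refinement algorithm for BMTS. -/
inductive Avoid {A S : Type} (M : BMTS A S) : S → Set S → Prop
  | empty (s : S) : Avoid M s ∅
  | step (s : S) (𝒯 : Set S) (Ms : Set (A × S)) (later : A → S → Set (A × S) → Set S)
      (hM : Ms ∈ M.Tran ∅ s)
      (h1 : ∀ t ∈ 𝒯, ∀ Nt ∈ M.Tran ∅ t, ∃ a : A,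
        (∃ ta, (a, ta) ∈ Nt ∧ ∀ sa, (a, sa) ∈ Ms →
          ∀ f, (∃ t' ∈ 𝒯, f ∈ M.Tran ∅ t') → ta ∈ later a sa f) ∨
        (∃ sa, (a, sa) ∈ Ms ∧ ∀ ta, (a, ta) ∈ Nt → ta ∈ later a sa Nt))
      (h2 : ∀ f, (∃ t' ∈ 𝒯, f ∈ M.Tran ∅ t') →
        ∀ a sa, (a, sa) ∈ Ms → Avoid M sa (later a sa f)) :
      Avoid M s 𝒯

/-- The decreasing sequence `Rⁿ_{μ,ν}` of bounded modal refinement relations. -/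
def BoundedRel {A S1 S2 P1 P2 : Type} (M1 : PMTS A S1 P1) (M2 : PMTS A S2 P2)
    (μ : Set P1) (ν : Set P2) : ℕ → Set (S1 × S2)
  | 0 => Set.univ
  | n + 1 => {p | ∀ Ms ∈ M1.Tran μ p.1, ∃ N ∈ M2.Tran ν p.2,
      (∀ q ∈ Ms, ∃ t' : S2, (q.1, t') ∈ N ∧ (q.2, t') ∈ BoundedRel M1 M2 μ ν n) ∧
      (∀ q ∈ N, ∃ s' : S1, (q.1, s') ∈ Ms ∧ (s', q.2) ∈ BoundedRel M1 M2 μ ν n)}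

/-- The de-negation DMTS `M^D` of a BMTS: its states are the admissible transition sets. -/
noncomputable def PMTS.deNeg {A S : Type} [Fintype A] [Fintype S] (M : BMTS A S) :
    BMTS A (Set (A × S)) where
  T := {x | ∃ s' : S, (x.2.1, s') ∈ x.1 ∧ x.2.2 ∈ M.Tran ∅ s'}
  Φ := fun E => ((Set.toFinite E).toFinset).toList.foldr
    (fun q acc => .and
      (((Set.toFinite (M.Tran ∅ q.2)).toFinset).toList.foldr
        (fun M' acc2 => .or (.var (Sum.inl (q.1, M'))) acc2) (.neg .tt)) acc) .tt

lemma BForm.sat_map {X Y : Type} (V : Set Y) (f : X → BForm Y) (φ : BForm X) :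
    (φ.map f).sat V ↔ φ.sat {x | (f x).sat V} := by
  induction φ with
  | tt => rfl
  | var x => rfl
  | neg φ ih => exact not_congr ih
  | and φ ψ ih₁ ih₂ => exact and_congr ih₁ ih₂
  | or φ ψ ih₁ ih₂ => exact or_congr ih₁ ih₂

lemma BForm.sat_foldr_and {X Y : Type} (V : Set Y) (c : X → BForm Y) (l : List X) :
    (l.foldr (fun x acc => BForm.and (c x) acc) BForm.tt).sat V ↔ ∀ x ∈ l, (c x).sat V := by
  induction l with
  | nil => simp [BForm.sat]
  | cons a l ih => simp [BForm.sat, ih]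

lemma BForm.sat_iff {X : Type} (V : Set X) (φ ψ : BForm X) :
    (φ.iff ψ).sat V ↔ (φ.sat V ↔ ψ.sat V) := by
  simp only [BForm.iff, BForm.sat]
  tauto

lemma PMTS.toBMTS_tran {A S P : Type} (M : PMTS A S P) (ν : Set P) (s : S) :
    (M.toBMTS ν).Tran ∅ s = M.Tran ν s := by
  have hsubst (E : Set (A × S)) :
      {x | (paramSubst ν x).sat (Sum.inl '' E ∪ Sum.inr '' (∅ : Set Empty))}
        = (Sum.inl '' E ∪ Sum.inr '' ν : Set ((A × S) ⊕ P)) := by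
    ext (x | p)
    · simp [paramSubst, BForm.sat]
    · by_cases hp : p ∈ ν <;> simp [paramSubst, hp, BForm.sat]
  ext E
  simp only [PMTS.Tran, PMTS.toBMTS, Set.mem_ofPred_eq, BForm.sat_map, hsubst]
  rfl

lemma isRefRel_toBMTS_iff {A S1 S2 P1 P2 : Type} {M1 : PMTS A S1 P1} {M2 : PMTS A S2 P2}
    {μ : Set P1} {ν : Set P2} {R : Set (S1 × S2)} :
    IsRefRel (M1.toBMTS μ) (M2.toBMTS ν) R ↔ RefCond M1 M2 μ ν R := by
  simp only [IsRefRel, RefCond, PMTS.toBMTS_tran]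

def StepMatch {A S1 S2 : Type} (R : Set (S1 × S2)) (F : Set (A × S1)) (E : Set (A × S2)) :
    Prop :=
  (∀ q ∈ F, ∃ t, (q.1, t) ∈ E ∧ (q.2, t) ∈ R) ∧
    (∀ q ∈ E, ∃ s, (q.1, s) ∈ F ∧ (s, q.2) ∈ R)

namespace StepMatch

variable {A S1 S2 : Type} {R : Set (S1 × S2)} {F : Set (A × S1)} {E : Set (A × S2)}

lemma image {S3 : Type} {R' : Set (S3 × S2)} {e : S1 → S3} (h : StepMatch R F E)
    (he : ∀ x y, (x, y) ∈ R → (e x, y) ∈ R') : StepMatch R' (Prod.map id e '' F) E := by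
  refine ⟨?_, fun q hq => ?_⟩
  · rintro _ ⟨q, hq, rfl⟩
    obtain ⟨t, hqt, hR⟩ := h.1 q hq
    exact ⟨t, hqt, he _ _ hR⟩
  · obtain ⟨s, hs, hR⟩ := h.2 q hq
    exact ⟨e s, ⟨(q.1, s), hs, rfl⟩, he _ _ hR⟩

lemma insert (h : StepMatch R F E) {q : A × S1} {t : S2} (hq : (q.1, t) ∈ E)
    (hR : (q.2, t) ∈ R) : StepMatch R (insert q F) E := by
  refine ⟨?_, fun q' hq' => ?_⟩
  · rintro q' (rfl | hq')
    exacts [⟨t, hq, hR⟩, h.1 q' hq']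
  · obtain ⟨s, hs, hR⟩ := h.2 q' hq'
    exact ⟨s, Set.mem_insert_of_mem _ hs, hR⟩

lemma fst_mem (h : StepMatch R F E) {q : A × S2} (hq : q ∈ E) : q.1 ∈ Prod.fst '' F :=
  let ⟨s, hs, _⟩ := h.2 q hq
  ⟨(q.1, s), hs, rfl⟩

end StepMatch

lemma stepMatch_empty_iff {A S1 S2 : Type} {R : Set (S1 × S2)} {F : Set (A × S1)} :
    StepMatch R F (∅ : Set (A × S2)) ↔ F = ∅ := by
  simp [StepMatch, Set.eq_empty_iff_forall_notMem]

lemma stepMatch_const_iff {A S1 S2 : Type} {R : Set (S1 × S2)} {F : Set (A × S1)}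
    {ν : Set A} {j : S2} :
    StepMatch R F {q | q.1 ∈ ν ∧ q.2 = j} ↔
      Prod.fst '' F = ν ∧ ∀ q ∈ F, (q.2, j) ∈ R := by
  constructor
  · rintro ⟨hF, hE⟩
    refine ⟨Set.Subset.antisymm ?_ fun a ha => ?_, fun q hq => ?_⟩
    · rintro _ ⟨q, hq, rfl⟩
      obtain ⟨t, ⟨ha, -⟩, -⟩ := hF q hq
      exact ha
    · obtain ⟨s, hs, -⟩ := hE (a, j) ⟨ha, rfl⟩
      exact ⟨(a, s), hs, rfl⟩
    · obtain ⟨t, ⟨-, rfl⟩, hR⟩ := hF q hq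
      exact hR
  · rintro ⟨rfl, hR⟩
    refine ⟨fun q hq => ⟨j, ⟨⟨q, hq, rfl⟩, rfl⟩, hR q hq⟩, ?_⟩
    rintro ⟨_, _⟩ ⟨⟨q, hq, rfl⟩, rfl⟩
    exact ⟨q.2, hq, hR q hq⟩

lemma refCond_iff_stepMatch {A S1 S2 P1 P2 : Type} {M1 : PMTS A S1 P1} {M2 : PMTS A S2 P2}
    {μ : Set P1} {ν : Set P2} {R : Set (S1 × S2)} :
    RefCond M1 M2 μ ν R ↔
      ∀ x ∈ R, ∀ F ∈ M1.Tran μ x.1, ∃ E ∈ M2.Tran ν x.2, StepMatch R F E :=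
  Iff.rfl

noncomputable def implOfSucc {A S : Type} (f : S → Finset (A × S)) : BMTS A S where
  T := {x | (x.2.1, x.2.2) ∈ f x.1}
  Φ := fun s => (f s).toList.foldr (fun q acc => .and (.var (Sum.inl q)) acc) .tt

section implOfSucc

variable {A S : Type} (f : S → Finset (A × S))

lemma implOfSucc_tran (μ : Set Empty) (s : S) : (implOfSucc f).Tran μ s = {↑(f s)} := by
  ext E
  simp only [PMTS.Tran, Set.mem_ofPred_eq, Set.mem_singleton_iff, implOfSucc,
    BForm.sat_foldr_and, Finset.mem_toList, BForm.sat, Set.mem_union, Set.mem_image,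
    Sum.inl.injEq, exists_eq_right, reduceCtorEq, and_false, exists_false, or_false]
  exact ⟨fun h => h.1.antisymm h.2, fun h => ⟨h.le, h.ge⟩⟩

lemma implOfSucc_isImplementation : (implOfSucc f).IsImplementation :=
  fun s => implOfSucc_tran f ∅ s

variable {S' P' : Type} {M : PMTS A S' P'} {μ : Set Empty} {ν : Set P'} {R : Set (S × S')}

lemma refCond_implOfSucc_iff :
    RefCond (implOfSucc f) M μ ν R ↔
      ∀ x ∈ R, ∃ E ∈ M.Tran ν x.2, StepMatch R ↑(f x.1) E := by
  simp [refCond_iff_stepMatch, implOfSucc_tran]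

end implOfSucc

lemma Set.eq_setOf_mem_and_snd_eq_iff {X Y : Type} {E : Set (X × Y)} {ν : Set X} {j : Y} :
    E = {q | q.1 ∈ ν ∧ q.2 = j} ↔
      (∀ q ∈ E, q.2 = j) ∧ ∀ x, (x, j) ∈ E ↔ x ∈ ν := by
  constructor
  · rintro rfl
    exact ⟨fun q hq => hq.2, fun x => ⟨fun h => h.1, fun h => ⟨h, rfl⟩⟩⟩
  · rintro ⟨hE, hν⟩
    ext ⟨x, y⟩
    constructor
    · intro h
      obtain rfl : y = j := hE _ h
      exact ⟨(hν x).1 h, rfl⟩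
    · rintro ⟨hx, rfl : y = j⟩
      exact (hν x).2 hx

section blowup

variable {P : Type} [Fintype P] [DecidableEq P] (ν : Set P)

lemma blowupPMTS_tran_zero :
    (blowupPMTS P).Tran ν 0 = {{q | q.1 ∈ ν ∧ q.2 = 1}} := by
  ext E
  simp [PMTS.Tran, PMTS.Tsucc, blowupPMTS, BForm.sat_foldr_and, BForm.sat_iff, BForm.sat,
    Set.eq_setOf_mem_and_snd_eq_iff, Set.subset_def]

lemma blowupPMTS_tran_one :
    (blowupPMTS P).Tran ν 1 = {{q | q.1 ∈ ν ∧ q.2 = 2}} := by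
  ext E
  simp [PMTS.Tran, PMTS.Tsucc, blowupPMTS, BForm.sat_foldr_and, BForm.sat_iff, BForm.sat,
    Set.eq_setOf_mem_and_snd_eq_iff, Set.subset_def]

lemma blowupPMTS_tran_two : (blowupPMTS P).Tran ν 2 = {∅} := by
  ext E
  simp [PMTS.Tran, PMTS.Tsucc, blowupPMTS, BForm.sat, Set.subset_def,
    Set.eq_empty_iff_forall_notMem]

end blowup

def IsUniformTwoStep {A S : Type} (f : S → Finset (A × S)) (s : S) (ν : Set A) : Prop :=
  Prod.fst '' (f s : Set (A × S)) = ν ∧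
    ∀ q ∈ f s, Prod.fst '' (f q.2 : Set (A × S)) = ν ∧ ∀ q' ∈ f q.2, f q'.2 = ∅

lemma pRefines_blowupPMTS_iff {P S : Type} [Fintype P] [DecidableEq P]
    (f : S → Finset (P × S)) (s : S) :
    PRefines (implOfSucc f) (blowupPMTS P) s 0 ↔ ∃ ν, IsUniformTwoStep f s ν := by
  simp only [PRefines, BRefines, isRefRel_toBMTS_iff, refCond_implOfSucc_iff]
  constructor
  · intro h
    obtain ⟨ν, R, hs, hR⟩ := h ∅
    have h0 {k : S} (hk : (k, 0) ∈ R) := hR _ hk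
    have h1 {k : S} (hk : (k, 1) ∈ R) := hR _ hk
    have h2 {k : S} (hk : (k, 2) ∈ R) := hR _ hk
    simp only [blowupPMTS_tran_zero, blowupPMTS_tran_one, blowupPMTS_tran_two,
      Set.mem_singleton_iff, exists_eq_left, stepMatch_const_iff, stepMatch_empty_iff,
      Finset.coe_eq_empty] at h0 h1 h2
    refine ⟨ν, (h0 hs).1, fun q hq => ⟨(h1 ((h0 hs).2 q hq)).1, fun q' hq' => ?_⟩⟩
    exact h2 ((h1 ((h0 hs).2 q hq)).2 q' hq')
  · rintro ⟨ν, hroot, hchild⟩ -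
    refine ⟨ν, {x | (x.2 = 0 ∧ x.1 = s) ∨ (x.2 = 1 ∧ ∃ q ∈ f s, q.2 = x.1) ∨
      (x.2 = 2 ∧ ∃ q ∈ f s, ∃ q' ∈ f q.2, q'.2 = x.1)}, Or.inl ⟨rfl, rfl⟩, ?_⟩
    rintro ⟨k, i⟩ (⟨rfl, rfl⟩ | ⟨rfl, q, hq, rfl⟩ | ⟨rfl, q, hq, q', hq', rfl⟩)
    · refine ⟨{q | q.1 ∈ ν ∧ q.2 = 1}, blowupPMTS_tran_zero ν ▸ rfl,
        stepMatch_const_iff.2 ⟨hroot, ?_⟩⟩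
      exact fun q hq => Or.inr (Or.inl ⟨rfl, q, hq, rfl⟩)
    · refine ⟨{q | q.1 ∈ ν ∧ q.2 = 2}, blowupPMTS_tran_one ν ▸ rfl,
        stepMatch_const_iff.2 ⟨(hchild q hq).1, ?_⟩⟩
      exact fun q' hq' => Or.inr (Or.inr ⟨rfl, q, hq, q', hq', rfl⟩)
    · refine ⟨∅, blowupPMTS_tran_two ν ▸ rfl, stepMatch_empty_iff.2 ?_⟩
      exact Finset.coe_eq_empty.2 ((hchild q hq).2 q' hq')

open Classical in
noncomputable def graft {A S T : Type} (f : S → Finset (A × S)) (s : S)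
    (g : T → Finset (A × T)) (a : A) (t : T) :
    Option (S ⊕ T) → Finset (A × Option (S ⊕ T))
  | none => insert (a, some (.inr t)) ((f s).image (Prod.map id (some ∘ .inl)))
  | some (.inl x) => (f x).image (Prod.map id (some ∘ .inl))
  | some (.inr y) => (g y).image (Prod.map id (some ∘ .inr))

lemma bRefines_graft {A S T S' : Type} {N : BMTS A S'} {f : S → Finset (A × S)} {s : S}
    {g : T → Finset (A × T)} {a : A} {t : T} {n u : S'} {R₁ : Set (S × S')}
    {E : Set (A × S')} (hf : IsRefRel (implOfSucc f) N R₁) (hE : E ∈ N.Tran ∅ n)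
    (hmatch : StepMatch R₁ ↑(f s) E) (ha : (a, u) ∈ E) (hg : BRefines (implOfSucc g) N t u) :
    BRefines (implOfSucc (graft f s g a t)) N none n := by
  obtain ⟨R₂, ht, hg⟩ := hg
  rw [IsRefRel, refCond_implOfSucc_iff] at hf hg
  refine ⟨{x | match x.1 with
    | none => x.2 = n
    | some (.inl y) => (y, x.2) ∈ R₁
    | some (.inr z) => (z, x.2) ∈ R₂}, rfl, ?_⟩
  rw [IsRefRel, refCond_implOfSucc_iff]
  rintro ⟨_ | y | z, v⟩ hv
  · obtain rfl : v = n := hv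
    refine ⟨E, hE, ?_⟩
    simp only [graft, Finset.coe_insert, Finset.coe_image]
    refine (hmatch.image ?_).insert (t := u) ha ht
    exact fun _ _ h => h
  · obtain ⟨E', hE', hm⟩ := hf _ hv
    refine ⟨E', hE', ?_⟩
    simp only [graft, Finset.coe_image]
    exact hm.image fun _ _ h => h
  · obtain ⟨E', hE', hm⟩ := hg _ hv
    refine ⟨E', hE', ?_⟩
    simp only [graft, Finset.coe_image]
    exact hm.image fun _ _ h => h

def ImplementsOnlyOneStep {A S' : Type} (N : BMTS A S') (u : S') (ν : Set A) : Prop :=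
  ∀ (T : Type) (g : T → Finset (A × T)) (t : T), BRefines (implOfSucc g) N t u →
    Prod.fst '' (g t : Set (A × T)) = ν ∧ ∀ q ∈ g t, g q.2 = ∅

def twoStep {A : Type} (B : Finset A) (k : ℕ) : Finset (A × ℕ) :=
  if k < 2 then B.map (Function.Embedding.sectL A (k + 1)) else ∅

section twoStep

variable {A : Type} {B : Finset A}

@[simp]
lemma mem_twoStep {k : ℕ} {q : A × ℕ} :
    q ∈ twoStep B k ↔ k < 2 ∧ q.1 ∈ B ∧ q.2 = k + 1 := by
  unfold twoStep
  split_ifs with hk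
  · constructor
    · simp only [Finset.mem_map, Function.Embedding.sectL_apply]
      rintro ⟨x, hx, rfl⟩
      exact ⟨hk, hx, rfl⟩
    · rintro ⟨-, hq, hq'⟩
      exact Finset.mem_map.2 ⟨q.1, hq, Prod.ext rfl hq'.symm⟩
  · simp [hk]

lemma fst_image_twoStep {k : ℕ} (hk : k < 2) :
    Prod.fst '' (twoStep B k : Set (A × ℕ)) = B := by
  ext x
  simp [hk]

lemma isUniformTwoStep_twoStep : IsUniformTwoStep (twoStep B) 0 B := by
  refine ⟨fst_image_twoStep (by norm_num), fun q hq => ?_⟩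
  obtain ⟨-, -, hq⟩ := mem_twoStep.1 hq
  refine ⟨hq ▸ fst_image_twoStep (by norm_num), fun q' hq' => ?_⟩
  obtain ⟨-, -, hq'⟩ := mem_twoStep.1 hq'
  ext
  simp [hq', hq]

variable {S' : Type} {N : BMTS A S'} {u : S'} {ν : Set A}

lemma ImplementsOnlyOneStep.eq_of_bRefines_twoStep (h : ImplementsOnlyOneStep N u ν)
    (hB : BRefines (implOfSucc (twoStep B)) N 1 u) : (B : Set A) = ν :=
  fst_image_twoStep (B := B) one_lt_two ▸ (h ℕ _ 1 hB).1

lemma ImplementsOnlyOneStep.not_bRefines_twoStep_zero (h : ImplementsOnlyOneStep N u ν)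
    (hB : B.Nonempty) : ¬ BRefines (implOfSucc (twoStep B)) N 0 u := by
  intro hB0
  obtain ⟨p, hp⟩ := hB
  have hdead := (h ℕ _ 0 hB0).2 (p, 1) (by simp [hp])
  simpa [hp] using congrArg ((p, 2) ∈ ·) hdead

end twoStep

section answer

variable {P S' : Type} [Fintype P] [DecidableEq P] {N : BMTS P S'} {n0 : S'}

lemma implementsOnlyOneStep_of_mem_tran
    (h : ∀ (SI : Type) (I : BMTS P SI) (i : SI), I.IsImplementation →
      BRefines I N i n0 → PRefines I (blowupPMTS P) i 0)
    {S : Type} {f : S → Finset (P × S)} {s : S} {R : Set (S × S')} {E : Set (P × S')} {a : P}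
    {u : S'}
    (hf : IsRefRel (implOfSucc f) N R) (hE : E ∈ N.Tran ∅ n0) (hmatch : StepMatch R ↑(f s) E)
    (ha : (a, u) ∈ E) :
    ImplementsOnlyOneStep N u (Prod.fst '' (f s : Set (P × S))) := by
  intro T g t hg
  obtain ⟨ν, hroot, hchild⟩ := (pRefines_blowupPMTS_iff _ none).1 <|
    h _ _ none (implOfSucc_isImplementation _) (bRefines_graft hf hE hmatch ha hg)
  obtain ⟨hlabels, hdead⟩ := hchild (a, some (.inr t)) (by simp [graft])
  have hν : ν = Prod.fst '' (f s : Set (P × S)) := by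
    simp only [graft, Finset.coe_insert, Finset.coe_image, Set.image_insert_eq,
      Set.image_image, Prod.map_fst, id] at hroot
    rw [← hroot, Set.insert_eq_of_mem (hmatch.fst_mem ha)]
  refine ⟨?_, fun q hq => ?_⟩
  · simpa [graft, hν, Set.image_image] using hlabels
  · have := hdead (q.1, some (.inr q.2)) (by simp [graft, hq])
    simpa [graft] using this

lemma exists_implementsOnlyOneStep
    (h : ∀ (SI : Type) (I : BMTS P SI) (i : SI), I.IsImplementation →
      BRefines I N i n0 → PRefines I (blowupPMTS P) i 0)
    {A : Finset P} (hA : A.Nonempty) (h0 : BRefines (implOfSucc (twoStep A)) N 0 n0) :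
    ∃ u, ImplementsOnlyOneStep N u A ∧ BRefines (implOfSucc (twoStep A)) N 1 u := by
  obtain ⟨R, hR0, hR⟩ := h0
  obtain ⟨E, hE, hmatch⟩ := (refCond_implOfSucc_iff _).1 hR _ hR0
  obtain ⟨p, hp⟩ := hA
  obtain ⟨u, hu, hR1⟩ := hmatch.1 (p, 1) (by simp [hp])
  refine ⟨u, ?_, R, hR1, hR⟩
  simpa [fst_image_twoStep] using implementsOnlyOneStep_of_mem_tran h hR hE hmatch hu

end answer

theorem deParam_blowup_unavoidable {P : Type} [Fintype P] [DecidableEq P]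
    {S' : Type} [Fintype S'] (N : BMTS P S') (n0 : S')
    (h : ∀ (SI : Type) (I : BMTS P SI) (i : SI), I.IsImplementation →
      (PRefines I (blowupPMTS P) i 0 ↔ BRefines I N i n0)) :
    2 ^ Fintype.card P ≤ Fintype.card S' := by
  have hroot (A : Finset P) : BRefines (implOfSucc (twoStep A)) N 0 n0 :=
    (h _ _ _ (implOfSucc_isImplementation _)).1
      ((pRefines_blowupPMTS_iff _ _).2 ⟨_, isUniformTwoStep_twoStep⟩)
  have : Nonempty S' := ⟨n0⟩
  choose! u hu using fun A (hA : A.Nonempty) =>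
    exists_implementsOnlyOneStep (fun SI I i hI => (h SI I i hI).2) hA (hroot A)
  have hne (A : Finset P) (hA : A.Nonempty) : u A ≠ n0 := fun he =>
    (hu A hA).1.not_bRefines_twoStep_zero hA (he ▸ hroot A)
  have hinj : Function.Injective fun A : Finset P => if A.Nonempty then u A else n0 := by
    intro A B hAB
    by_cases hA : A.Nonempty <;> by_cases hB : B.Nonempty <;>
      simp only [hA, hB, if_true, if_false] at hAB
    · exact_mod_cast ((hu A hA).1.eq_of_bRefines_twoStep (hAB ▸ (hu B hB).2)).symm
    · exact absurd hAB (hne A hA)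
    · exact absurd hAB.symm (hne B hB)
    · rw [Finset.not_nonempty_iff_eq_empty.1 hA, Finset.not_nonempty_iff_eq_empty.1 hB]
  simpa using Fintype.card_le_of_injective _ hinj
end

section
/- Soundness of Avoid: for processes s, t₁,…,tₙ of a finite, globally consistent BMTS, if (s, {t₁,…,tₙ}) ∈ Avoid, then there exists an implementation I such that I ≤ₘ s and I ≰ₘ tᵢ for every i ∈ {1,…,n}. -/
/-! Induction on `Avoid`. If no state of `𝒯` has an admissible transition set, no implementation
refines any of them, and any implementation of `s` (which exists by global consistency) will do.
Otherwise, for every transition `(a, sa)` of the chosen admissible set `Ms` of `s` and every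
admissible set `f` of a state of `𝒯`, the induction hypothesis provides an implementation of `sa`
refining no state of `later a sa f`. Gluing these under a fresh root, with one `a`-step into each,
gives an implementation of `s`. If it refined some `t ∈ 𝒯`, the refinement would match its root
with an admissible set `N` of `t`, and each of the two alternatives of the `Avoid` rule for `N`
yields a glued implementation that refines a state it was chosen to avoid. -/

section Refinement

variable {A S₁ S₂ : Type} {M₁ : BMTS A S₁} {M₂ : BMTS A S₂}

/-- The functional whose greatest fixed point is modal refinement. -/
def RefStep (M₁ : BMTS A S₁) (M₂ : BMTS A S₂) (R : S₁ → S₂ → Prop) (s : S₁) (t : S₂) : Prop :=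
  ∀ Ms ∈ M₁.Tran ∅ s, ∃ N ∈ M₂.Tran ∅ t,
    (∀ q ∈ Ms, ∃ t', (q.1, t') ∈ N ∧ R q.2 t') ∧ (∀ q ∈ N, ∃ s', (q.1, s') ∈ Ms ∧ R s' q.2)

theorem RefStep.mono {R R' : S₁ → S₂ → Prop} (hRR' : ∀ s t, R s t → R' s t) {s : S₁} {t : S₂}
    (h : RefStep M₁ M₂ R s t) : RefStep M₁ M₂ R' s t := fun Ms hMs =>
  (h Ms hMs).imp fun _ ⟨hN, fwd, bwd⟩ =>
    ⟨hN, fun q hq => (fwd q hq).imp fun _ h => ⟨h.1, hRR' _ _ h.2⟩,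
      fun q hq => (bwd q hq).imp fun _ h => ⟨h.1, hRR' _ _ h.2⟩⟩

theorem isRefRel_iff {R : Set (S₁ × S₂)} :
    IsRefRel M₁ M₂ R ↔ ∀ p ∈ R, RefStep M₁ M₂ (fun s t => (s, t) ∈ R) p.1 p.2 :=
  Iff.rfl

theorem bRefines_iff {s : S₁} {t : S₂} :
    BRefines M₁ M₂ s t ↔ RefStep M₁ M₂ (BRefines M₁ M₂) s t := by
  have unfold : ∀ {s t}, BRefines M₁ M₂ s t → RefStep M₁ M₂ (BRefines M₁ M₂) s t :=
    fun ⟨R, hst, hR⟩ => (isRefRel_iff.1 hR _ hst).mono fun _ _ h => ⟨R, h, hR⟩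
  refine ⟨unfold, fun h => ⟨insert (s, t) {p | BRefines M₁ M₂ p.1 p.2}, Set.mem_insert _ _,
    isRefRel_iff.2 ?_⟩⟩
  rintro ⟨s', t'⟩ hp
  refine RefStep.mono (fun _ _ h => Or.inr h) ?_
  rcases hp with hp | hp
  · obtain ⟨rfl, rfl⟩ := Prod.mk.inj hp
    exact h
  · exact unfold hp

theorem PMTS.IsImplementation.bRefines_iff (hI : M₁.IsImplementation) {s : S₁} {t : S₂} :
    BRefines M₁ M₂ s t ↔ ∃ N ∈ M₂.Tran ∅ t,
      (∀ q ∈ M₁.Tsucc s, ∃ t', (q.1, t') ∈ N ∧ BRefines M₁ M₂ q.2 t') ∧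
      (∀ q ∈ N, ∃ s', (q.1, s') ∈ M₁.Tsucc s ∧ BRefines M₁ M₂ s' q.2) := by
  rw [_root_.bRefines_iff, RefStep, hI s]
  simp only [Set.mem_singleton_iff, forall_eq]

theorem bRefines_iff_of_tran_eq_image {S₁' : Type} {M₁' : BMTS A S₁'} {φ : S₁ → S₁'}
    (hφ : ∀ x, M₁'.Tran ∅ (φ x) = Set.image (Prod.map id φ) '' M₁.Tran ∅ x) {x : S₁} {u : S₂} :
    BRefines M₁' M₂ (φ x) u ↔ BRefines M₁ M₂ x u := by
  constructor
  · intro h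
    refine ⟨{p | BRefines M₁' M₂ (φ p.1) p.2}, h, ?_⟩
    rintro ⟨x, u⟩ hxu E hE
    obtain ⟨N, hN, fwd, bwd⟩ := bRefines_iff.1 hxu _ (hφ x ▸ Set.mem_image_of_mem _ hE)
    refine ⟨N, hN, fun q hq => fwd _ (Set.mem_image_of_mem _ hq), fun q hq => ?_⟩
    obtain ⟨_, ⟨⟨a, s₀⟩, hs₀, he⟩, href⟩ := bwd q hq
    obtain ⟨rfl, rfl⟩ := Prod.mk.inj he
    exact ⟨s₀, hs₀, href⟩
  · intro h
    refine ⟨{p | ∃ x, p.1 = φ x ∧ BRefines M₁ M₂ x p.2}, ⟨x, rfl, h⟩, ?_⟩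
    rintro ⟨_, u⟩ ⟨x, rfl, hxu⟩ E hE
    rw [hφ x] at hE
    obtain ⟨E₀, hE₀, rfl⟩ := hE
    obtain ⟨N, hN, fwd, bwd⟩ := bRefines_iff.1 hxu E₀ hE₀
    refine ⟨N, hN, ?_, fun q hq => ?_⟩
    · rintro _ ⟨q, hq, rfl⟩
      obtain ⟨t', ht', href⟩ := fwd q hq
      exact ⟨t', ht', q.2, rfl, href⟩
    · obtain ⟨s', hs', href⟩ := bwd q hq
      exact ⟨φ s', ⟨_, hs', rfl⟩, s', rfl, href⟩

end Refinement

def allOf {X : Type} (l : List X) : BForm X :=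
  l.foldr (fun x acc => .and (.var x) acc) .tt

theorem sat_allOf {X : Type} (ν : Set X) (l : List X) :
    BForm.sat ν (allOf l) ↔ ∀ x ∈ l, x ∈ ν := by
  induction l with
  | nil => simp [allOf, BForm.sat]
  | cons x l ih => simp [allOf, BForm.sat, ← ih]

def relabelAtom {X Y : Type} (g : X → Y) : X ⊕ Empty → BForm (Y ⊕ Empty)
  | Sum.inl x => .var (Sum.inl (g x))
  | Sum.inr e => e.elim

theorem sat_map_relabelAtom {X Y : Type} (g : X → Y) (E : Set Y) (φ : BForm (X ⊕ Empty)) :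
    BForm.sat (Sum.inl '' E ∪ Sum.inr '' ∅) (φ.map (relabelAtom g)) ↔
      BForm.sat (Sum.inl '' (g ⁻¹' E) ∪ Sum.inr '' ∅) φ := by
  induction φ with
  | var x =>
    rcases x with x | e
    · simp [BForm.map, BForm.sat, relabelAtom]
    · exact e.elim
  | _ => simp_all [BForm.map, BForm.sat]

theorem tran_eq_singleton_of_phi_eq_allOf {A S : Type} {M : BMTS A S} {s : S} {l : List (A × S)}
    (hl : {q | q ∈ l} = M.Tsucc s) (hΦ : M.Φ s = allOf (l.map Sum.inl)) :
    M.Tran ∅ s = {M.Tsucc s} := by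
  ext E
  have hsat : BForm.sat (Sum.inl '' E ∪ Sum.inr '' ∅) (M.Φ s) ↔ M.Tsucc s ⊆ E := by
    simp only [hΦ, sat_allOf, List.forall_mem_map, Set.image_empty, Set.union_empty,
      Sum.inl_injective.mem_set_image, ← hl]
    rfl
  exact ⟨fun h => h.1.antisymm (hsat.1 h.2), fun h => ⟨h.le, hsat.2 h.ge⟩⟩

theorem tran_eq_image_of_phi_eq_map_relabelAtom {A S S' : Type} {M : BMTS A S} {M' : BMTS A S'}
    {g : A × S → A × S'} (hg : g.Injective) {x : S} {y : S'} (hT : M'.Tsucc y = g '' M.Tsucc x)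
    (hΦ : M'.Φ y = (M.Φ x).map (relabelAtom g)) :
    M'.Tran ∅ y = Set.image g '' M.Tran ∅ x := by
  ext E
  simp only [PMTS.Tran, hΦ, sat_map_relabelAtom, hT, Set.mem_image]
  constructor
  · rintro ⟨hE, hsat⟩
    refine ⟨g ⁻¹' E, ⟨?_, hsat⟩,
      Set.image_preimage_eq_of_subset (hE.trans (Set.image_subset_range _ _))⟩
    rw [← Set.preimage_image_eq (M.Tsucc x) hg]
    exact Set.preimage_mono hE
  · rintro ⟨E₀, ⟨hE₀, hsat⟩, rfl⟩
    exact ⟨Set.image_mono hE₀, by rwa [Set.preimage_image_eq _ hg]⟩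

section RootedSum

variable {A K : Type} {SI : K → Type}

abbrev inComponent (k : K) (x : SI k) : Option (Σ k, SI k) := some ⟨k, x⟩

theorem inComponent_injective (k : K) : (inComponent (SI := SI) k).Injective :=
  Option.some_injective _ |>.comp sigma_mk_injective

variable [Fintype K]

noncomputable def rootedSum (I : ∀ k, BMTS A (SI k)) (root : ∀ k, SI k) (act : K → A) :
    BMTS A (Option (Σ k, SI k)) where
  T := Set.range (fun k => (none, act k, inComponent k (root k))) ∪
    ⋃ k, (fun p => (inComponent k p.1, p.2.1, inComponent k p.2.2)) '' (I k).T
  Φ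
    | none => allOf (((Finset.univ : Finset K).toList.map
        fun k => (act k, inComponent k (root k))).map Sum.inl)
    | some ⟨k, x⟩ => ((I k).Φ x).map (relabelAtom (Prod.map id (inComponent k)))

variable (I : ∀ k, BMTS A (SI k)) (root : ∀ k, SI k) (act : K → A)

theorem rootedSum_tsucc_none :
    (rootedSum I root act).Tsucc none = Set.range fun k => (act k, inComponent k (root k)) := by
  ext q
  simp [PMTS.Tsucc, rootedSum]

theorem rootedSum_tsucc_inComponent (k : K) (x : SI k) :
    (rootedSum I root act).Tsucc (inComponent k x) =
      Prod.map id (inComponent k) '' (I k).Tsucc x := by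
  ext ⟨b, v⟩
  simp only [PMTS.Tsucc, rootedSum, Set.mem_union, Set.mem_iUnion, Set.mem_image, Set.mem_range,
    Prod.mk.injEq, Prod.map, id, inComponent, Option.some.injEq, Sigma.mk.inj_iff, reduceCtorEq]
  constructor
  · rintro (⟨_, h, -⟩ | ⟨i, ⟨y, a, z⟩, hT, ⟨rfl, hy⟩, rfl, rfl⟩)
    · exact h.elim
    · cases hy
      exact ⟨(a, z), hT, rfl, rfl⟩
  · rintro ⟨⟨a, z⟩, hT, rfl, rfl⟩
    exact Or.inr ⟨k, (x, a, z), hT, ⟨rfl, HEq.rfl⟩, rfl, rfl⟩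

theorem rootedSum_tran_none :
    (rootedSum I root act).Tran ∅ none = {(rootedSum I root act).Tsucc none} := by
  refine tran_eq_singleton_of_phi_eq_allOf ?_ rfl
  ext q
  simp [rootedSum_tsucc_none]

theorem rootedSum_tran_inComponent (k : K) (x : SI k) :
    (rootedSum I root act).Tran ∅ (inComponent k x) =
      Set.image (Prod.map id (inComponent k)) '' (I k).Tran ∅ x :=
  tran_eq_image_of_phi_eq_map_relabelAtom (Function.injective_id.prodMap (inComponent_injective k))
    (rootedSum_tsucc_inComponent I root act k x) rfl

theorem rootedSum_isImplementation (hI : ∀ k, (I k).IsImplementation) :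
    (rootedSum I root act).IsImplementation
  | none => rootedSum_tran_none I root act
  | some ⟨k, x⟩ => by
    rw [rootedSum_tran_inComponent, hI k, Set.image_singleton, rootedSum_tsucc_inComponent]

theorem rootedSum_bRefines_inComponent_iff {S : Type} {M : BMTS A S} {k : K} {x : SI k}
    {u : S} :
    BRefines (rootedSum I root act) M (inComponent k x) u ↔ BRefines (I k) M x u :=
  bRefines_iff_of_tran_eq_image (rootedSum_tran_inComponent I root act k)

theorem rootedSum_bRefines_none_iff (hI : ∀ k, (I k).IsImplementation) {S : Type} {M : BMTS A S}
    {t : S} :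
    BRefines (rootedSum I root act) M none t ↔ ∃ N ∈ M.Tran ∅ t,
      (∀ k, ∃ t', (act k, t') ∈ N ∧ BRefines (I k) M (root k) t') ∧
      (∀ q ∈ N, ∃ k, act k = q.1 ∧ BRefines (I k) M (root k) q.2) := by
  rw [(rootedSum_isImplementation I root act hI).bRefines_iff, rootedSum_tsucc_none]
  simp only [Set.forall_mem_range]
  refine exists_congr fun N => and_congr_right fun _ => and_congr ?_ (forall₂_congr fun q _ => ?_)
  · simp only [rootedSum_bRefines_inComponent_iff]
  · simp only [Set.mem_range, Prod.mk.injEq]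
    constructor
    · rintro ⟨_, ⟨k, hk, rfl⟩, h⟩
      exact ⟨k, hk, (rootedSum_bRefines_inComponent_iff I root act).1 h⟩
    · rintro ⟨k, hk, h⟩
      exact ⟨_, ⟨k, hk, rfl⟩, (rootedSum_bRefines_inComponent_iff I root act).2 h⟩

end RootedSum

section Avoid

variable {A S : Type} {M : BMTS A S}

variable (M) in
def HasImplAvoiding (s : S) (𝒯 : Set S) : Prop :=
  ∃ (SI : Type) (I : BMTS A SI) (i : SI), I.IsImplementation ∧
    BRefines I M i s ∧ ∀ t ∈ 𝒯, ¬ BRefines I M i t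

theorem hasImplAvoiding_of_tran_eq_empty (hM : M.SemConsistent) (s : S) {𝒯 : Set S}
    (h𝒯 : ∀ t ∈ 𝒯, M.Tran ∅ t = ∅) : HasImplAvoiding M s 𝒯 := by
  obtain ⟨SI, I, i, hI, hs⟩ := hM s
  refine ⟨SI, I, i, hI, hs, fun t ht hit => ?_⟩
  obtain ⟨N, hN, -⟩ := hI.bRefines_iff.1 hit
  rw [h𝒯 t ht] at hN
  exact hN

theorem hasImplAvoiding_step [Finite A] [Finite S] {s : S} {𝒯 : Set S} {Ms : Set (A × S)}
    {later : A → S → Set (A × S) → Set S} (hMs : Ms ∈ M.Tran ∅ s)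
    (h1 : ∀ t ∈ 𝒯, ∀ Nt ∈ M.Tran ∅ t, ∃ a : A,
      (∃ ta, (a, ta) ∈ Nt ∧ ∀ sa, (a, sa) ∈ Ms →
        ∀ f, (∃ t' ∈ 𝒯, f ∈ M.Tran ∅ t') → ta ∈ later a sa f) ∨
      (∃ sa, (a, sa) ∈ Ms ∧ ∀ ta, (a, ta) ∈ Nt → ta ∈ later a sa Nt))
    (h2 : ∀ f, (∃ t' ∈ 𝒯, f ∈ M.Tran ∅ t') →
      ∀ a sa, (a, sa) ∈ Ms → HasImplAvoiding M sa (later a sa f))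
    (hadm : ∃ f, ∃ t' ∈ 𝒯, f ∈ M.Tran ∅ t') : HasImplAvoiding M s 𝒯 := by
  let K := {p : (A × S) × Set (A × S) // p.1 ∈ Ms ∧ ∃ t' ∈ 𝒯, p.2 ∈ M.Tran ∅ t'}
  have : Fintype K := Fintype.ofFinite K
  choose SI I root hI hs hnot using fun k : K => h2 k.1.2 k.2.2 k.1.1.1 k.1.1.2 k.2.1
  let act : K → A := fun k => k.1.1.1
  have href (t : S) := rootedSum_bRefines_none_iff I root act hI (M := M) (t := t)
  refine ⟨_, rootedSum I root act, none, rootedSum_isImplementation I root act hI, ?_,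
    fun t ht hit => ?_⟩
  · obtain ⟨f, hf⟩ := hadm
    exact (href s).2 ⟨Ms, hMs, fun k => ⟨k.1.1.2, k.2.1, hs k⟩,
      fun q hq => ⟨⟨(q, f), hq, hf⟩, rfl, hs _⟩⟩
  · obtain ⟨N, hN, fwd, bwd⟩ := (href t).1 hit
    rcases h1 t ht N hN with ⟨a, ⟨ta, hta, hlater⟩ | ⟨sa, hsa, hlater⟩⟩
    · obtain ⟨⟨⟨⟨a, sa⟩, f⟩, hsa, hf⟩, rfl, hrefines⟩ := bwd _ hta
      exact hnot _ ta (hlater sa hsa f hf) hrefines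
    · obtain ⟨ta, hta, hrefines⟩ := fwd ⟨((a, sa), N), hsa, t, ht, hN⟩
      exact hnot _ ta (hlater ta hta) hrefines

end Avoid

theorem avoid_sound {A S : Type} [Finite A] [Finite S]
    (M : BMTS A S) (hM : M.SemConsistent) (s : S) (𝒯 : Set S)
    (h : Avoid M s 𝒯) :
    ∃ (SI : Type) (I : BMTS A SI) (i : SI), I.IsImplementation ∧
      BRefines I M i s ∧ ∀ t ∈ 𝒯, ¬ BRefines I M i t := by
  suffices HasImplAvoiding M s 𝒯 from this
  induction h with
  | empty s => exact hasImplAvoiding_of_tran_eq_empty hM s fun _ ht => ht.elim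
  | step s 𝒯 Ms later hMs h1 _ ih =>
    by_cases hadm : ∃ f, ∃ t' ∈ 𝒯, f ∈ M.Tran ∅ t'
    · exact hasImplAvoiding_step hMs h1 ih hadm
    · exact hasImplAvoiding_of_tran_eq_empty hM s fun t ht =>
        Set.eq_empty_of_forall_notMem fun f hf => hadm ⟨f, t, ht, hf⟩
end

section
/- Deterministic targets with parameters break completeness: there exist a BMTS state s₀ and a deterministic PMTS state t₀ with s₀ ≤ₜ t₀ but s₀ ≰ₘ t₀. A witness: BMTS ({s₀,s₁}, {(s₀,a,s₁)}, ∅, Φ(s₀)=tt, Φ(s₁)=tt) and deterministic PMTS ({t₀,t₁}, {(t₀,a,t₁)}, {p}, Φ(t₀)=((a,t₁)⇔p), Φ(t₁)=tt); both have as implementations (up to refinement) exactly those with no transitions or a single a-step, so ⟦s₀⟧ = ⟦t₀⟧, yet no single valuation of p lets t₀ admit both the empty and the nonempty transition set. -/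
/-! Every implementation of `s₀` has a root whose `a`-successors are all deadlocks, and such an
implementation refines `t₀` once `p` is chosen to hold exactly when the root has a successor.
Modal refinement of `s₀` itself, however, must fix `p` once for both admissible transition sets of
`s₀`: `p` true rules out the empty set, `p` false rules out the step. -/

namespace BForm

variable {X : Type}

lemma sat_map_s16 {Y : Type} (V : Set Y) (f : X → BForm Y) (φ : BForm X) :
    (φ.map f).sat V ↔ φ.sat {x | (f x).sat V} := by
  induction φ <;> simp [BForm.map, BForm.sat, *]

@[simp]
lemma sat_iff_s16 (V : Set X) (φ ψ : BForm X) : (φ.iff ψ).sat V ↔ (φ.sat V ↔ ψ.sat V) := by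
  simp only [BForm.iff, BForm.sat]
  tauto

end BForm

lemma setOf_sat_paramSubst {X P : Type} (E : Set X) (ν : Set P) :
    {x : X ⊕ P | (paramSubst ν x).sat (Sum.inl '' E ∪ Sum.inr '' ∅)} =
      Sum.inl '' E ∪ Sum.inr '' ν := by
  ext (x | p)
  · simp [paramSubst, BForm.sat]
  · by_cases hp : p ∈ ν <;> simp [paramSubst, hp, BForm.sat]

namespace PMTS

variable {A S P : Type}

lemma tran_toBMTS (M : PMTS A S P) (ν : Set P) (s : S) :
    (M.toBMTS ν).Tran ∅ s = M.Tran ν s := by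
  ext E
  simp only [Tran, toBMTS, Tsucc, Set.mem_ofPred_eq, BForm.sat_map_s16, setOf_sat_paramSubst]

lemma refCond_toBMTS {S' P' : Type} (M : PMTS A S P) (M' : PMTS A S' P') (μ : Set P)
    (ν : Set P') (R : Set (S × S')) :
    IsRefRel (M.toBMTS μ) (M'.toBMTS ν) R ↔ RefCond M M' μ ν R := by
  simp only [IsRefRel, RefCond, tran_toBMTS]

lemma IsImplementation.refCond_iff {S' P' : Type} {I : BMTS A S} (hI : I.IsImplementation)
    (M : PMTS A S' P') (ν : Set P') (R : Set (S × S')) :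
    RefCond I M ∅ ν R ↔ ∀ p ∈ R, ∃ N ∈ M.Tran ν p.2,
      (∀ q ∈ I.Tsucc p.1, ∃ t', (q.1, t') ∈ N ∧ (q.2, t') ∈ R) ∧
      (∀ q ∈ N, ∃ s', (q.1, s') ∈ I.Tsucc p.1 ∧ (s', q.2) ∈ R) := by
  simp only [RefCond, show ∀ s, I.Tran ∅ s = {I.Tsucc s} from hI, Set.mem_singleton_iff,
    forall_eq]

end PMTS

lemma pRefines_iff {A S S' P' : Type} (M : BMTS A S) (M' : PMTS A S' P') (s : S) (t : S') :
    PRefines M M' s t ↔ ∃ ν R, (s, t) ∈ R ∧ RefCond M M' ∅ ν R := by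
  simp only [PRefines, BRefines, PMTS.refCond_toBMTS, Set.eq_empty_of_isEmpty, forall_const]

lemma RefCond.exists_succ {A S S' P P' : Type} {M : PMTS A S P} {M' : PMTS A S' P'} {μ : Set P}
    {ν : Set P'} {R : Set (S × S')} (hR : RefCond M M' μ ν R) {s : S} {t : S'}
    (hst : (s, t) ∈ R) {Ms : Set (A × S)} (hMs : Ms ∈ M.Tran μ s) {a : A} {s' : S}
    (hs' : (a, s') ∈ Ms) :
    ∃ t', (t, a, t') ∈ M'.T ∧ (s', t') ∈ R := by
  obtain ⟨N, ⟨hNT, -⟩, hfwd, -⟩ := hR _ hst Ms hMs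
  obtain ⟨t', ht'N, ht'R⟩ := hfwd _ hs'
  exact ⟨t', hNT ht'N, ht'R⟩

/- The witnesses: state `false` is `s₀` / `t₀` and `true` is `s₁` / `t₁`; the action `a` and
the parameter `p` are both `()`. -/
def optionalStep : BMTS Unit Bool := ⟨{(false, (), true)}, fun _ => .tt⟩

def paramStep : PMTS Unit Bool Unit :=
  ⟨{(false, (), true)}, fun
    | false => .iff (.var (.inl ((), true))) (.var (.inr ()))
    | true => .tt⟩

@[simp]
lemma optionalStep_tsucc_false : optionalStep.Tsucc false = {((), true)} := by
  ext q; simp [optionalStep, PMTS.Tsucc, Prod.ext_iff]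

lemma optionalStep_mem_tran {ν : Set Empty} {s : Bool} {E : Set (Unit × Bool)} :
    E ∈ optionalStep.Tran ν s ↔ E ⊆ optionalStep.Tsucc s := by
  simp [PMTS.Tran, optionalStep, BForm.sat]

lemma paramStep_mem_tran_false {ν : Set Unit} {E : Set (Unit × Bool)} :
    E ∈ paramStep.Tran ν false ↔ E ⊆ {((), true)} ∧ (((), true) ∈ E ↔ () ∈ ν) := by
  have hT : paramStep.Tsucc false = {((), true)} := by
    ext q; simp [paramStep, PMTS.Tsucc, Prod.ext_iff]
  rw [PMTS.Tran, Set.mem_ofPred_eq, hT]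
  simp [paramStep, BForm.sat, Unique.exists_iff]

lemma paramStep_mem_tran_true {ν : Set Unit} {E : Set (Unit × Bool)} :
    E ∈ paramStep.Tran ν true ↔ E = ∅ := by
  simp [PMTS.Tran, paramStep, PMTS.Tsucc, BForm.sat, Set.subset_empty_iff]

lemma paramStep_deterministic : paramStep.Deterministic := by
  rintro s a t t' ⟨-, -, rfl⟩ ⟨-, -, rfl⟩
  rfl

lemma not_pRefines_optionalStep_paramStep : ¬ PRefines optionalStep paramStep false false := by
  rw [pRefines_iff]
  rintro ⟨ν, R, h₀, hR⟩
  by_cases hp : () ∈ ν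
  · obtain ⟨N, hN, -, hbwd⟩ := hR _ h₀ ∅ (optionalStep_mem_tran.2 (Set.empty_subset _))
    obtain ⟨s', hs', -⟩ := hbwd _ ((paramStep_mem_tran_false.1 hN).2.2 hp)
    exact hs'
  · obtain ⟨N, hN, hfwd, -⟩ := hR _ h₀ {((), true)} (optionalStep_mem_tran.2 (by simp))
    obtain ⟨hNsub, hNp⟩ := paramStep_mem_tran_false.1 hN
    obtain ⟨t', ht', -⟩ := hfwd ((), true) rfl
    obtain rfl : t' = true := by simpa using hNsub ht'
    exact hp (hNp.1 ht')

lemma PMTS.IsImplementation.tsucc_eq_empty_of_refCond_optionalStep {SI : Type}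
    {I : BMTS Unit SI} (hI : I.IsImplementation) {ν : Set Empty} {R : Set (SI × Bool)}
    (hR : RefCond I optionalStep ∅ ν R) {i : SI} (hi : (i, false) ∈ R) {w : SI}
    (hw : ((), w) ∈ I.Tsucc i) : I.Tsucc w = ∅ := by
  have htran : ∀ s, I.Tsucc s ∈ I.Tran ∅ s := fun s => (hI s).symm ▸ rfl
  obtain ⟨t, ht, hwt⟩ := hR.exists_succ hi (htran i) hw
  obtain rfl : t = true := by simpa [optionalStep] using ht
  refine Set.eq_empty_of_forall_notMem fun ⟨a, w'⟩ hw' => ?_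
  obtain ⟨t', ht', -⟩ := hR.exists_succ hwt (htran w) hw'
  simp [optionalStep] at ht'

lemma PMTS.IsImplementation.exists_refCond_paramStep {SI : Type} {I : BMTS Unit SI}
    (hI : I.IsImplementation) {i : SI} (hdead : ∀ w, ((), w) ∈ I.Tsucc i → I.Tsucc w = ∅) :
    ∃ ν R, (i, false) ∈ R ∧ RefCond I paramStep ∅ ν R := by
  refine ⟨{_p | (I.Tsucc i).Nonempty},
    {p | p = (i, false) ∨ (p.2 = true ∧ ((), p.1) ∈ I.Tsucc i)}, Or.inl rfl, ?_⟩
  rw [hI.refCond_iff]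
  rintro p (rfl | ⟨hp, hs⟩)
  · refine ⟨{q | q = ((), true) ∧ (I.Tsucc i).Nonempty}, ?_, ?_, ?_⟩
    · exact paramStep_mem_tran_false.2 ⟨fun q hq => hq.1, by simp⟩
    · rintro ⟨⟨⟩, w⟩ hw
      exact ⟨true, ⟨rfl, _, hw⟩, Or.inr ⟨rfl, hw⟩⟩
    · rintro _ ⟨rfl, ⟨⟨⟩, w⟩, hw⟩
      exact ⟨w, hw, Or.inr ⟨rfl, hw⟩⟩
  · refine ⟨∅, hp ▸ paramStep_mem_tran_true.2 rfl, ?_, fun q hq => hq.elim⟩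
    simp [hdead p.1 hs]

theorem deterministic_pmts_breaks_completeness :
    ∃ (A S1 S2 P2 : Type) (M1 : BMTS A S1) (M2 : PMTS A S2 P2)
      (s0 : S1) (t0 : S2),
      M2.Deterministic ∧ ThoroughRefines M1 M2 s0 t0 ∧ ¬ PRefines M1 M2 s0 t0 := by
  refine ⟨Unit, Bool, Bool, Unit, optionalStep, paramStep, false, false, paramStep_deterministic,
    ?_, not_pRefines_optionalStep_paramStep⟩
  intro SI I i hI hrefines
  obtain ⟨ν, R, hi, hR⟩ := (pRefines_iff _ _ _ _).1 hrefines
  exact (pRefines_iff _ _ _ _).2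
    (hI.exists_refCond_paramStep fun _ => hI.tsucc_eq_empty_of_refCond_optionalStep hR hi)
end
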